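/- arXiv:2006.06603 — 2 statements merged into one kernel-verified Lean document; each statement's English description precedes it below -/
import Mathlib

section
/- Let σ be a strongly convex rational polyhedral cone in ℝⁿ and let S_σ = {m ∈ ℤⁿ : ⟨m, x⟩ ≥ 0 for all x ∈ σ} be its dual monoid. Then the natural evaluation map from σ to the set of monoid homomorphisms Hom(S_σ, ℝ_{≥0}) is a bijection. -/
/-- A strongly convex rational polyhedral cone in `ℝⁿ`: generated by finitely many
integer vectors and containing no line. -/
def IsStronglyConvexRatCone (n : ℕ) (σ : Set (Fin n → ℝ)) : Prop :=
  (∃ (m : ℕ) (g : Fin m → (Fin n → ℤ)),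
      σ = {x | ∃ c : Fin m → ℝ, (∀ i, 0 ≤ c i) ∧
        x = ∑ i, c i • (fun j => (g i j : ℝ))}) ∧
  ∀ x ∈ σ, -x ∈ σ → x = 0

/-- The dual monoid `S_σ = {m ∈ ℤⁿ : ⟨m, x⟩ ≥ 0 for all x ∈ σ}`. -/
def dualMonoid (n : ℕ) (σ : Set (Fin n → ℝ)) : AddSubmonoid (Fin n → ℤ) where
  carrier := {m | ∀ x ∈ σ, 0 ≤ ∑ j, (m j : ℝ) * x j}
  zero_mem' := by intro x _; simp
  add_mem' := by
    intro a b ha hb x hx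
    have h1 := ha x hx
    have h2 := hb x hx
    have : ∑ j, (((a + b) j : ℤ) : ℝ) * x j
        = (∑ j, (a j : ℝ) * x j) + ∑ j, (b j : ℝ) * x j := by
      rw [← Finset.sum_add_distrib]
      apply Finset.sum_congr rfl
      intro j _
      push_cast [Pi.add_apply]
      ring
    rw [this]
    linarith

/-!
Since `σ` is salient, its dual cone has nonempty interior, and this open cone contains an
integral point `p` (round a large multiple of any interior point). For every `z ∈ ℤⁿ` and `N ≫ 0`,
`N • p + z ∈ S_σ`, so `S_σ - S_σ = ℤⁿ`: every homomorphism `S_σ → ℝ` extends uniquely to `ℤⁿ`,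
i.e. is evaluation at a unique `x ∈ ℝⁿ`. If `x ∉ σ`, Farkas' lemma (which needs `σ` closed: conic
Carathéodory) separates `x` from `σ`; perturbing the separating functional into the interior of
the dual cone and rounding again yields `m ∈ S_σ` with `⟨m, x⟩ < 0`.
-/

open Set Filter PointedCone Matrix

lemma AddSubmonoid.exists_addMonoidHom_extend {G H : Type*} [AddCommGroup G] [AddCommGroup H]
    {S : AddSubmonoid G} (hS : ∀ g, ∃ a ∈ S, ∃ b ∈ S, a - b = g) (φ : S →+ H) :
    ∃ ψ : G →+ H, ∀ s : S, ψ s = φ s := by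
  choose a ha b hb hab using hS
  have hwd : ∀ {x y x' y' : S}, (x : G) - y = x' - y' → φ x - φ y = φ x' - φ y' := by
    intro x y x' y' h
    rw [sub_eq_sub_iff_add_eq_add, ← map_add, ← map_add]
    exact congrArg φ (Subtype.ext (by simpa using sub_eq_sub_iff_add_eq_add.mp h))
  refine ⟨AddMonoidHom.mk' (fun g => φ ⟨a g, ha g⟩ - φ ⟨b g, hb g⟩) fun g h => ?_, fun s => ?_⟩
  · rw [sub_add_sub_comm, ← map_add, ← map_add]
    refine hwd ?_
    change a (g + h) - b (g + h) = (a g + a h) - (b g + b h)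
    rw [add_sub_add_comm, hab, hab, hab]
  · simpa using hwd (x' := s) (y' := 0) (by simp [hab])

namespace PointedCone

variable {E : Type*} [AddCommGroup E] [Module ℝ E]

lemma mem_hull_range_iff_exists_nonneg {ι : Type*} [Fintype ι] {v : ι → E} {x : E} :
    x ∈ hull ℝ (range v) ↔ ∃ c : ι → ℝ, (∀ i, 0 ≤ c i) ∧ x = ∑ i, c i • v i := by
  rw [Submodule.mem_span_range_iff_exists_fun]
  constructor
  · rintro ⟨c, rfl⟩
    exact ⟨fun i => c i, fun i => (c i).2, by simp⟩
  · rintro ⟨c, hc, rfl⟩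
    exact ⟨fun i => ⟨c i, hc i⟩, by simp⟩

/-- Move `c` along the relation `a` until the first coefficient vanishes. -/
lemma exists_nonneg_coeff_eq_zero_of_sum_smul_eq_zero {ι : Type*} [Fintype ι] {v : ι → E}
    {a : ι → ℝ} (ha : ∑ i, a i • v i = 0) {i₁ : ι} (hi₁ : a i₁ < 0)
    {c : ι → ℝ} (hc : ∀ i, 0 ≤ c i) :
    ∃ c' : ι → ℝ, (∀ i, 0 ≤ c' i) ∧ (∃ i, c' i = 0) ∧ ∑ i, c' i • v i = ∑ i, c i • v i := by
  classical
  obtain ⟨i₀, hi₀, hmin⟩ := ({i | a i < 0} : Finset ι).exists_min_image (fun i => c i / -a i)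
    ⟨i₁, by simpa using hi₁⟩
  simp only [Finset.mem_filter, Finset.mem_univ, true_and] at hi₀ hmin
  set t := c i₀ / -a i₀
  have ht : 0 ≤ t := div_nonneg (hc i₀) (by linarith)
  refine ⟨fun i => c i + t * a i, fun i => ?_, ⟨i₀, ?_⟩, ?_⟩
  · rcases le_or_gt 0 (a i) with hai | hai
    · nlinarith [hc i]
    · have := (le_div_iff₀ (neg_pos.mpr hai)).mp (hmin i hai)
      linarith
  · simp only [t]
    field_simp [hi₀.ne]
    ring
  · simp only [add_smul, Finset.sum_add_distrib, mul_smul, ← Finset.smul_sum, ha, smul_zero,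
      add_zero]

lemma hull_range_eq_iUnion_hull_range_succAbove {k : ℕ} {v : Fin (k + 1) → E}
    (hv : ¬ LinearIndependent ℝ v) :
    (hull ℝ (range v) : Set E) =
      ⋃ i : Fin (k + 1), (hull ℝ (range (v ∘ i.succAbove)) : Set E) := by
  refine Subset.antisymm (fun x hx => ?_) (iUnion_subset fun i =>
    Submodule.span_mono (range_comp_subset_range _ _))
  obtain ⟨a, ha, i₁, hi₁⟩ : ∃ a : Fin (k + 1) → ℝ, ∑ i, a i • v i = 0 ∧ ∃ i, a i < 0 := by
    obtain ⟨a, ha, i, hi⟩ := Fintype.not_linearIndependent_iff.mp hv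
    rcases hi.lt_or_gt with hi | hi
    · exact ⟨a, ha, i, hi⟩
    · exact ⟨-a, by simp [ha], i, by simpa⟩
  obtain ⟨c, hc, rfl⟩ := mem_hull_range_iff_exists_nonneg.mp hx
  obtain ⟨c', hc', ⟨i₀, hi₀⟩, hsum⟩ :=
    exists_nonneg_coeff_eq_zero_of_sum_smul_eq_zero ha hi₁ hc
  refine mem_iUnion.mpr ⟨i₀, mem_hull_range_iff_exists_nonneg.mpr
    ⟨c' ∘ i₀.succAbove, fun j => hc' _, ?_⟩⟩
  rw [← hsum, Fin.sum_univ_succAbove _ i₀, hi₀, zero_smul, zero_add]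
  rfl

variable [TopologicalSpace E] [T2Space E] [IsTopologicalAddGroup E] [ContinuousSMul ℝ E]

lemma isClosed_hull_range_of_linearIndependent {ι : Type*} [Fintype ι] {v : ι → E}
    (hv : LinearIndependent ℝ v) : IsClosed (hull ℝ (range v) : Set E) := by
  have hemb : Topology.IsClosedEmbedding (Fintype.linearCombination ℝ v) :=
    LinearMap.isClosedEmbedding_of_injective (LinearMap.ker_eq_bot.mpr
      (linearIndependent_iff_injective_fintypeLinearCombination.mp hv))
  have himage : (hull ℝ (range v) : Set E) = Fintype.linearCombination ℝ v '' Ici 0 := by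
    ext x
    simp [mem_hull_range_iff_exists_nonneg, Fintype.linearCombination_apply, Pi.le_def, eq_comm]
  rw [himage]
  exact hemb.isClosedMap _ isClosed_Ici

/-- Conic Carathéodory: the cone is a finite union of cones on linearly independent
generators. -/
lemma isClosed_hull_range : ∀ {m : ℕ} (v : Fin m → E), IsClosed (hull ℝ (range v) : Set E)
  | 0, _ => isClosed_hull_range_of_linearIndependent linearIndependent_empty_type
  | k + 1, v => by
    by_cases hv : LinearIndependent ℝ v
    · exact isClosed_hull_range_of_linearIndependent hv
    · rw [hull_range_eq_iUnion_hull_range_succAbove hv]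
      exact isClosed_iUnion_of_finite fun i => isClosed_hull_range _

end PointedCone

section IntegerPoints

variable {n m : ℕ}

lemma dotProduct_nonneg_of_mem_hull {ι : Type*} [Fintype ι] {v : ι → Fin n → ℝ}
    {w x : Fin n → ℝ} (hw : ∀ i, 0 ≤ w ⬝ᵥ v i) (hx : x ∈ hull ℝ (range v)) : 0 ≤ w ⬝ᵥ x := by
  obtain ⟨c, hc, rfl⟩ := mem_hull_range_iff_exists_nonneg.mp hx
  simp only [dotProduct_sum, dotProduct_smul, smul_eq_mul]
  exact Finset.sum_nonneg fun i _ => mul_nonneg (hc i) (hw i)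

lemma exists_dotProduct_neg_of_notMem_hull {v : Fin m → Fin n → ℝ} {x : Fin n → ℝ}
    (hx : x ∉ hull ℝ (range v)) : ∃ w : Fin n → ℝ, (∀ i, 0 ≤ w ⬝ᵥ v i) ∧ w ⬝ᵥ x < 0 := by
  let C : ProperCone ℝ (Fin n → ℝ) := ⟨hull ℝ (range v), isClosed_hull_range v⟩
  obtain ⟨f, hf, hfx⟩ := C.hyperplane_separation_point (x₀ := x) hx
  have hfw : ∀ y, f y = (fun j => f (Pi.single j 1)) ⬝ᵥ y := fun y => by
    rw [dotProduct_comm, ← ContinuousLinearMap.coe_coe, LinearMap.pi_apply_eq_sum_univ]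
    refine Finset.sum_congr rfl fun j _ => ?_
    congr 2
    ext k
    simp [Pi.single_apply, eq_comm]
  refine ⟨_, fun i => ?_, hfw x ▸ hfx⟩
  rw [← hfw]
  exact hf _ (subset_hull (mem_range_self i))

lemma exists_dotProduct_pos_of_salient {v : Fin m → Fin n → ℝ}
    (hsal : (hull ℝ (range v) : ConvexCone ℝ (Fin n → ℝ)).Salient) :
    ∃ u : Fin n → ℝ, ∀ i, v i ≠ 0 → 0 < u ⬝ᵥ v i := by
  have h : ∀ i, ∃ w : Fin n → ℝ, (∀ k, 0 ≤ w ⬝ᵥ v k) ∧ (v i ≠ 0 → 0 < w ⬝ᵥ v i) := fun i => by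
    by_cases hi : v i = 0
    · exact ⟨0, by simp, (absurd hi ·)⟩
    · obtain ⟨w, hw, hwi⟩ :=
        exists_dotProduct_neg_of_notMem_hull (hsal _ (subset_hull (mem_range_self i)) hi)
      exact ⟨w, hw, fun _ => by simpa [dotProduct_neg] using hwi⟩
  choose w hw hwi using h
  refine ⟨∑ i, w i, fun k hk => ?_⟩
  rw [sum_dotProduct]
  exact (hwi k hk).trans_le (Finset.single_le_sum (fun i _ => hw i k) (Finset.mem_univ k))

/-- Rounding `r⁻¹ • w` moves it by at most `1 / 2` in the sup norm, so rescaling by `r` lands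
in the ball `B(w, r) ⊆ U`. -/
lemma exists_intCast_mem_of_isOpen {U : Set (Fin n → ℝ)} (hU : IsOpen U)
    (hsmul : ∀ t : ℝ, 0 < t → ∀ y ∈ U, t • y ∈ U) {w : Fin n → ℝ} (hw : w ∈ U) :
    ∃ z : Fin n → ℤ, Int.cast ∘ z ∈ U := by
  obtain ⟨r, hr, hball⟩ := Metric.isOpen_iff.mp hU w hw
  obtain ⟨z, hz⟩ : ∃ z : Fin n → ℤ, ‖Int.cast ∘ z - r⁻¹ • w‖ ≤ 1 / 2 :=
    ⟨fun j => round (r⁻¹ * w j), (pi_norm_le_iff_of_nonneg (by norm_num)).mpr fun j => by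
      simp only [Pi.sub_apply, Function.comp_apply, Pi.smul_apply, smul_eq_mul,
        Real.norm_eq_abs, abs_sub_comm]
      exact abs_sub_round _⟩
  have hmem : r • (Int.cast ∘ z) ∈ U := by
    apply hball
    rw [mem_ball_iff_norm]
    calc ‖r • (Int.cast ∘ z) - w‖ = ‖r • (Int.cast ∘ z - r⁻¹ • w)‖ := by
          rw [smul_sub, smul_smul, mul_inv_cancel₀ hr.ne', one_smul]
      _ = r * ‖Int.cast ∘ z - r⁻¹ • w‖ := by rw [norm_smul, Real.norm_of_nonneg hr.le]
      _ ≤ r * (1 / 2) := by gcongr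
      _ < r := by linarith
  exact ⟨z, by simpa [smul_smul, hr.ne'] using hsmul r⁻¹ (inv_pos.mpr hr) _ hmem⟩

lemma exists_int_forall_dotProduct_pos {s : Set (Fin n → ℝ)} (hs : s.Finite) {w : Fin n → ℝ}
    (hw : ∀ y ∈ s, 0 < w ⬝ᵥ y) : ∃ z : Fin n → ℤ, ∀ y ∈ s, 0 < (Int.cast ∘ z) ⬝ᵥ y := by
  refine exists_intCast_mem_of_isOpen (U := {w | ∀ y ∈ s, 0 < w ⬝ᵥ y}) ?_
    (fun t ht w hw y hy => by simpa [smul_dotProduct] using mul_pos ht (hw y hy)) hw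
  simpa only [ofPred_forall] using
    hs.isOpen_biInter fun y _ => isOpen_lt continuous_const (by fun_prop)

lemma exists_int_dotProduct_pos_of_salient {v : Fin m → Fin n → ℝ}
    (hsal : (hull ℝ (range v) : ConvexCone ℝ (Fin n → ℝ)).Salient) :
    ∃ p : Fin n → ℤ, ∀ i, v i ≠ 0 → 0 < (Int.cast ∘ p) ⬝ᵥ v i := by
  obtain ⟨u, hu⟩ := exists_dotProduct_pos_of_salient hsal
  obtain ⟨p, hp⟩ := exists_int_forall_dotProduct_pos ((finite_range v).sdiff (t := {0}))
    (w := u) (by simpa using hu)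
  exact ⟨p, fun i hi => hp _ ⟨mem_range_self i, hi⟩⟩

/-- A real separating functional plus a small multiple of an interior point of the dual cone is
strictly positive on the nonzero generators and still negative at `x`; these strict inequalities
cut out an open cone, which contains an integral point. -/
lemma exists_int_dotProduct_neg_of_notMem_hull {v : Fin m → Fin n → ℝ} {x : Fin n → ℝ}
    (hsal : (hull ℝ (range v) : ConvexCone ℝ (Fin n → ℝ)).Salient)
    (hx : x ∉ hull ℝ (range v)) :
    ∃ z : Fin n → ℤ, (∀ i, 0 ≤ (Int.cast ∘ z) ⬝ᵥ v i) ∧ (Int.cast ∘ z) ⬝ᵥ x < 0 := by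
  obtain ⟨u, hu⟩ := exists_dotProduct_pos_of_salient hsal
  obtain ⟨w, hw, hwx⟩ := exists_dotProduct_neg_of_notMem_hull hx
  obtain ⟨ε, hε, hεx⟩ := exists_pos_mul_lt (neg_pos.mpr hwx) |u ⬝ᵥ x|
  have hpos : ∀ y ∈ insert (-x) (range v \ {0}), 0 < (w + ε • u) ⬝ᵥ y := by
    simp only [mem_insert_iff, Set.mem_sdiff, mem_range, mem_singleton_iff, forall_eq_or_imp,
      and_imp, forall_exists_index, forall_apply_eq_imp_iff, add_dotProduct, smul_dotProduct,
      smul_eq_mul, dotProduct_neg]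
    exact ⟨by nlinarith [le_abs_self (u ⬝ᵥ x)], fun i hi => by nlinarith [hw i, hu i hi]⟩
  obtain ⟨z, hz⟩ :=
    exists_int_forall_dotProduct_pos (((finite_range v).sdiff (t := {0})).insert (-x)) hpos
  refine ⟨z, fun i => ?_, by simpa [dotProduct_neg] using hz _ (Or.inl rfl)⟩
  by_cases hi : v i = 0
  · simp [hi]
  · exact (hz _ (Or.inr ⟨mem_range_self i, hi⟩)).le

def evalHom (x : Fin n → ℝ) : (Fin n → ℤ) →+ ℝ where
  toFun z := (Int.cast ∘ z) ⬝ᵥ x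
  map_zero' := by simp [dotProduct]
  map_add' a b := by simp [dotProduct, add_mul, Finset.sum_add_distrib]

lemma evalHom_single (x : Fin n → ℝ) (j : Fin n) : evalHom x (Pi.single j 1) = x j := by
  simp [evalHom, dotProduct, Pi.single_apply]

lemma evalHom_injective : Function.Injective (evalHom (n := n)) := fun x₁ x₂ h =>
  funext fun j => by rw [← evalHom_single x₁, h, evalHom_single]

lemma evalHom_surjective : Function.Surjective (evalHom (n := n)) := fun ψ =>
  ⟨fun j => ψ (Pi.single j 1), by ext j; simp [evalHom_single]⟩

lemma mem_dualMonoid_hull_iff {ι : Type*} [Fintype ι] {v : ι → Fin n → ℝ} {z : Fin n → ℤ} :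
    z ∈ dualMonoid n (hull ℝ (range v)) ↔ ∀ i, 0 ≤ evalHom (v i) z :=
  ⟨fun hz i => hz _ (subset_hull (mem_range_self i)),
    fun hz _ hx => dotProduct_nonneg_of_mem_hull hz hx⟩

lemma exists_mem_dualMonoid_sub_eq {v : Fin m → Fin n → ℝ}
    (hsal : (hull ℝ (range v) : ConvexCone ℝ (Fin n → ℝ)).Salient) (z : Fin n → ℤ) :
    ∃ a ∈ dualMonoid n (hull ℝ (range v)), ∃ b ∈ dualMonoid n (hull ℝ (range v)), a - b = z := by
  obtain ⟨p, hp⟩ := exists_int_dotProduct_pos_of_salient hsal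
  have hN : ∀ z, ∀ᶠ N : ℕ in atTop, N • p + z ∈ dualMonoid n (hull ℝ (range v)) := fun z => by
    simp only [mem_dualMonoid_hull_iff, eventually_all]
    intro i
    simp only [map_add, map_nsmul]
    simp only [nsmul_eq_mul]
    by_cases hi : v i = 0
    · simp [hi, evalHom, dotProduct]
    · exact (tendsto_atTop_add_const_right _ _ (tendsto_natCast_atTop_atTop.atTop_mul_const
        (hp i hi))).eventually_ge_atTop 0
  obtain ⟨N, ha, hb⟩ := ((hN z).and (hN 0)).exists
  exact ⟨_, ha, _, hb, by abel⟩

end IntegerPoints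

/-- The evaluation map from a strongly convex rational polyhedral cone `σ` to the set of
monoid homomorphisms `Hom(S_σ, ℝ_{≥0})` is a bijection: it is injective, and every
additive monoid homomorphism `S_σ → ℝ` with nonnegative values arises by evaluation at a
(unique) point of `σ`. -/
theorem eval_bijective (n : ℕ) (σ : Set (Fin n → ℝ))
    (hσ : IsStronglyConvexRatCone n σ) :
    (∀ x₁ ∈ σ, ∀ x₂ ∈ σ,
        (∀ m ∈ dualMonoid n σ, ∑ j, (m j : ℝ) * x₁ j = ∑ j, (m j : ℝ) * x₂ j) → x₁ = x₂) ∧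
    (∀ φ : dualMonoid n σ →+ ℝ, (∀ m, 0 ≤ φ m) →
        ∃ x ∈ σ, ∀ m : dualMonoid n σ, φ m = ∑ j, ((m : Fin n → ℤ) j : ℝ) * x j) := by
  obtain ⟨⟨m, g, hg⟩, hline⟩ := hσ
  obtain rfl : σ = hull ℝ (range fun i j => (g i j : ℝ)) :=
    hg.trans (ext fun x => mem_hull_range_iff_exists_nonneg.symm)
  have hsal : (hull ℝ (range fun i j => (g i j : ℝ)) : ConvexCone ℝ (Fin n → ℝ)).Salient :=
    fun x hx hx0 hnx => hx0 (hline x hx hnx)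
  have hspan := exists_mem_dualMonoid_sub_eq hsal
  refine ⟨fun x₁ _ x₂ _ h => evalHom_injective (AddMonoidHom.ext fun z => ?_), fun φ hφ => ?_⟩
  · obtain ⟨a, ha, b, hb, rfl⟩ := hspan z
    rw [map_sub, map_sub]
    exact congrArg₂ _ (h a ha) (h b hb)
  · obtain ⟨ψ, hψ⟩ := AddSubmonoid.exists_addMonoidHom_extend hspan φ
    obtain ⟨x, rfl⟩ := evalHom_surjective ψ
    refine ⟨x, ?_, fun z => (hψ z).symm⟩
    by_contra hx
    obtain ⟨z, hz, hzx⟩ := exists_int_dotProduct_neg_of_notMem_hull hsal hx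
    have hzS := mem_dualMonoid_hull_iff.mpr hz
    have hnonneg : 0 ≤ evalHom x z := hψ ⟨z, hzS⟩ ▸ hφ ⟨z, hzS⟩
    exact hnonneg.not_gt hzx
end

section
/- By Gordan's lemma, the dual monoid S_σ = σ^∨ ∩ ℤⁿ of a rational polyhedral cone σ ⊂ ℝⁿ is a finitely generated monoid. -/
open Matrix

theorem AddSubmonoid.fg_comap_nonneg {ι κ : Type*} [Finite ι] [Finite κ]
    (A : (ι → ℤ) →+ (κ → ℤ)) : ((Subsemiring.nonneg (κ → ℤ)).toAddSubmonoid.comap A).FG := by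
  let diff : (ι → ℕ) × (ι → ℕ) →+ (ι → ℤ) :=
    ((Nat.castAddMonoidHom ℤ).compLeft ι).comp (AddMonoidHom.fst _ _) -
      ((Nat.castAddMonoidHom ℤ).compLeft ι).comp (AddMonoidHom.snd _ _)
  let lhs : ((ι → ℕ) × (ι → ℕ)) × (κ → ℕ) →+ (κ → ℤ) :=
    A.comp (diff.comp (AddMonoidHom.fst _ _))
  let rhs : ((ι → ℕ) × (ι → ℕ)) × (κ → ℕ) →+ (κ → ℤ) :=
    ((Nat.castAddMonoidHom ℤ).compLeft κ).comp (AddMonoidHom.snd _ _)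
  suffices h : (Subsemiring.nonneg (κ → ℤ)).toAddSubmonoid.comap A =
      (lhs.eqLocusM rhs).map (diff.comp (AddMonoidHom.fst _ _)) by
    rw [h]
    exact (AddSubmonoid.fg_eqLocusM lhs rhs).map _
  ext u
  simp only [AddSubmonoid.mem_comap, AddSubmonoid.mem_map, AddMonoidHom.mem_eqLocusM]
  constructor
  · intro hu
    let p : (ι → ℕ) × (ι → ℕ) := (fun j => (u j).toNat, fun j => (-u j).toNat)
    have hp : diff p = u := funext fun j => Int.toNat_sub_toNat_neg (u j)
    refine ⟨(p, fun k => (A u k).toNat), ?_, hp⟩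
    change A (diff p) = _
    rw [hp]
    funext k
    exact (Int.toNat_of_nonneg (hu k)).symm
  · rintro ⟨x, hx, rfl⟩
    change 0 ≤ lhs x
    rw [hx]
    exact fun k => Int.natCast_nonneg _

theorem sum_intCast_mul_sum_smul {ι κ : Type*} [Fintype ι] [Fintype κ] (g : ι → κ → ℤ)
    (u : κ → ℤ) (c : ι → ℝ) :
    ∑ j, (u j : ℝ) * (∑ i, c i • fun j => (g i j : ℝ)) j = ∑ i, c i * ((g *ᵥ u) i : ℝ) := by
  simp only [Finset.sum_apply, Pi.smul_apply, smul_eq_mul, Finset.mul_sum, mulVec, dotProduct,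
    Int.cast_sum, Int.cast_mul]
  rw [Finset.sum_comm]
  exact Finset.sum_congr rfl fun i _ => Finset.sum_congr rfl fun j _ => by ring

theorem mem_dualMonoid_cone_iff {n m : ℕ} (g : Fin m → Fin n → ℤ) (u : Fin n → ℤ) :
    u ∈ dualMonoid n {x | ∃ c : Fin m → ℝ, (∀ i, 0 ≤ c i) ∧
      x = ∑ i, c i • (fun j => (g i j : ℝ))} ↔ 0 ≤ g *ᵥ u := by
  constructor
  · intro hu i
    have hgi := hu _ ⟨Pi.single i 1, fun k => by rw [Pi.single_apply]; split_ifs <;> norm_num, rfl⟩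
    rw [sum_intCast_mul_sum_smul] at hgi
    simpa [Pi.single_apply] using hgi
  · rintro hu x ⟨c, hc, rfl⟩
    rw [sum_intCast_mul_sum_smul]
    exact Finset.sum_nonneg fun i _ => mul_nonneg (hc i) (Int.cast_nonneg (hu i))

/-- Gordan's lemma: the dual monoid `S_σ = σ^∨ ∩ ℤⁿ` of a rational polyhedral cone
`σ ⊂ ℝⁿ` (generated by finitely many integer vectors) is a finitely generated monoid. -/
theorem gordan (n : ℕ) (σ : Set (Fin n → ℝ))
    (hσ : ∃ (m : ℕ) (g : Fin m → (Fin n → ℤ)),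
      σ = {x | ∃ c : Fin m → ℝ, (∀ i, 0 ≤ c i) ∧
        x = ∑ i, c i • (fun j => (g i j : ℝ))}) :
    (dualMonoid n σ).FG := by
  obtain ⟨m, g, rfl⟩ := hσ
  have hdual : dualMonoid n _ =
      (Subsemiring.nonneg (Fin m → ℤ)).toAddSubmonoid.comap (mulVecLin g).toAddMonoidHom :=
    AddSubmonoid.ext fun u => mem_dualMonoid_cone_iff g u
  rw [hdual]
  exact AddSubmonoid.fg_comap_nonneg _
end
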